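/- Let w be a braid word that begins with σ_1 and contains no occurrence of σ_1^{−1}. Let σ̂ ∈ Aut(F_n) be the image of the braid represented by w under Wada's representation of type (3). Then the reduced word representing σ̂(x_1) in F_n contains at least 2 occurrences of letters x_1^{±1}. -/

import Mathlib

/-- The defining relations of the braid group on `m + 1` strands (`m` generators
`σ_1, …, σ_m`, indexed here by `Fin m`): the commutation relations
`σ_i σ_j = σ_j σ_i` for `|i - j| > 1` and the braid relations
`σ_i σ_{i+1} σ_i = σ_{i+1} σ_i σ_{i+1}`. -/
def braidRels (m : ℕ) : Set (FreeGroup (Fin m)) :=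
  {r | (∃ i j : Fin m, (i : ℕ) + 1 < (j : ℕ) ∧
        r = FreeGroup.of i * FreeGroup.of j * (FreeGroup.of i)⁻¹ * (FreeGroup.of j)⁻¹) ∨
       (∃ i j : Fin m, (i : ℕ) + 1 = (j : ℕ) ∧
        r = FreeGroup.of i * FreeGroup.of j * FreeGroup.of i *
            (FreeGroup.of j * FreeGroup.of i * FreeGroup.of j)⁻¹)}

/-- The index in `Fin n` of the generator `x_i` of `F_n` acted on by `σ_i`
(the strand index `i`, `0`-based). -/
def xL (n : ℕ) (i : Fin (n - 1)) : Fin n := ⟨i, by have := i.isLt; omega⟩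

/-- The index in `Fin n` of the generator `x_{i+1}` of `F_n` acted on by `σ_i`. -/
def xR (n : ℕ) (i : Fin (n - 1)) : Fin n := ⟨(i : ℕ) + 1, by have := i.isLt; omega⟩

/-!
Call `g ∈ F_n` good if `g = x₁` or the reduced word of `g` begins with `x₁ x₁`. Reading `w` from
the right, `σ̂(x₁)` is obtained from `x₁` by applying automorphisms `σ_i^{±1}`: every `σ_i^{±1}`
with `i ≥ 2` preserves goodness, and `σ₁` sends good elements to elements whose reduced word begins
with `x₁ x₁`.

Both facts come from a finite description (`ImageShape`) of the beginning of the reduced word of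
`σ_i(L)` in terms of the first letter of a reduced word `L`, which is stable under prepending a
letter to `L`. For `i ≥ 2`, `σ_i` fixes `x₁`, and the image of a reduced word starting with a letter
other than `x_i^{±1}, x_{i+1}^{±1}` starts with that same letter; so `x₁ x₁` prefixes are both
preserved and reflected, which also covers `σ_i⁻¹`. For `σ₁`, the image of a reduced word `x₁ K`
never starts with `x₂⁻¹`, so `σ₁(x₁ x₁ K) = x₁ x₁ x₂ · σ₁(x₁ K)` without cancellation.
-/

namespace List

lemma eq_cons_or_forall_head?_ne {β : Type*} (R : List β) (a : β) :
    (∃ R', R = a :: R') ∨ ∀ z ∈ R.head?, z ≠ a := by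
  rcases R with _ | ⟨z, R'⟩
  · simp
  · by_cases h : z = a <;> simp [h]

end List

namespace FreeGroup

variable {α : Type*}

@[simp] lemma mk_nil : mk ([] : List (α × Bool)) = 1 := one_eq_mk.symm

lemma mk_cons (x : α × Bool) (L : List (α × Bool)) :
    mk (x :: L) = (if x.2 then of x.1 else (of x.1)⁻¹) * mk L := by
  rw [← List.singleton_append, ← mul_mk]
  rcases x with ⟨j, _ | _⟩ <;> rfl

lemma IsReduced.of_cons {x : α × Bool} {L : List (α × Bool)} (h : IsReduced (x :: L)) :
    IsReduced L :=
  (List.isChain_cons.1 h).2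

lemma IsReduced.head_ne {x : α × Bool} {L : List (α × Bool)} (h : IsReduced (x :: L)) :
    ∀ z ∈ L.head?, z ≠ (x.1, !x.2) := by
  intro z hz hzx
  have := (List.isChain_cons.1 h).1 z hz
  rw [hzx] at this
  simp at this

lemma IsReduced.cons_of_head_ne {L : List (α × Bool)} (hL : IsReduced L) {x : α × Bool}
    (h : ∀ z ∈ L.head?, z ≠ (x.1, !x.2)) : IsReduced (x :: L) := by
  refine List.isChain_cons.2 ⟨fun z hz h1 => ?_, hL⟩
  have := h z hz
  rcases x with ⟨_, _ | _⟩ <;> rcases z with ⟨_, _ | _⟩ <;> simp_all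

lemma toWord_eq_of_eq_mk [DecidableEq α] {g : FreeGroup α} {L : List (α × Bool)}
    (hL : IsReduced L) (h : g = mk L) : g.toWord = L := by
  rw [h, toWord_mk, hL.reduce_eq]

end FreeGroup

lemma Set.MapsTo.mulAut_mk {β G : Type*} [Group G] (φ : FreeGroup β →* MulAut G) {S : Set G}
    {w : List (β × Bool)}
    (h : ∀ p ∈ w,
      Set.MapsTo ⇑(if p.2 then φ (FreeGroup.of p.1) else (φ (FreeGroup.of p.1))⁻¹) S S) :
    Set.MapsTo (φ (FreeGroup.mk w)) S S := by
  induction w with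
  | nil => simpa using Set.mapsTo_id S
  | cons p w ih =>
    rw [FreeGroup.mk_cons, map_mul, MulAut.coe_mul]
    refine Set.MapsTo.comp ?_ (ih fun q hq => h q (by simp [hq]))
    rcases p with ⟨j, _ | _⟩ <;> simpa using h _ List.mem_cons_self

namespace WadaType3

open FreeGroup

variable {α : Type*}

lemma letter_cases (u v : α) (x : α × Bool) :
    (x.1 ≠ u ∧ x.1 ≠ v) ∨ x = (u, true) ∨ x = (u, false) ∨ x = (v, true) ∨
      x = (v, false) := by
  rcases x with ⟨j, _ | _⟩ <;> by_cases hu : j = u <;> by_cases hv : j = v <;> simp [hu, hv]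

variable [DecidableEq α] {u v : α}

def sigma (u v : α) : FreeGroup α →* FreeGroup α :=
  FreeGroup.lift fun j =>
    if j = u then of u ^ 2 * of v else if j = v then (of v)⁻¹ * (of u)⁻¹ * of v else of j

lemma sigma_of_left : sigma u v (of u) = of u ^ 2 * of v := by simp [sigma]

lemma sigma_of_right (huv : u ≠ v) : sigma u v (of v) = (of v)⁻¹ * (of u)⁻¹ * of v := by
  simp [sigma, huv.symm]

lemma sigma_of_of_ne {j : α} (hu : j ≠ u) (hv : j ≠ v) : sigma u v (of j) = of j := by
  simp [sigma, hu, hv]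

lemma eq_sigma (huv : u ≠ v) (f : FreeGroup α →* FreeGroup α)
    (hu : f (of u) = of u ^ 2 * of v) (hv : f (of v) = (of v)⁻¹ * (of u)⁻¹ * of v)
    (hother : ∀ j, j ≠ u → j ≠ v → f (of j) = of j) : f = sigma u v := by
  refine FreeGroup.ext_hom _ _ fun j => ?_
  by_cases hju : j = u
  · rw [hju, hu, sigma_of_left]
  by_cases hjv : j = v
  · rw [hjv, hv, sigma_of_right huv]
  rw [hother j hju hjv, sigma_of_of_ne hju hjv]

lemma sigma_mk_left : sigma u v (mk [(u, true)]) = mk [(u, true), (u, true), (v, true)] := by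
  simp [mk_cons, sigma_of_left, pow_two, mul_assoc]

lemma sigma_mk_left_inv :
    sigma u v (mk [(u, false)]) = mk [(v, false), (u, false), (u, false)] := by
  simp [mk_cons, sigma_of_left, pow_two, mul_assoc]

lemma sigma_mk_right (huv : u ≠ v) :
    sigma u v (mk [(v, true)]) = mk [(v, false), (u, false), (v, true)] := by
  simp [mk_cons, sigma_of_right huv, mul_assoc]

lemma sigma_mk_right_inv (huv : u ≠ v) :
    sigma u v (mk [(v, false)]) = mk [(v, false), (u, true), (v, true)] := by
  simp [mk_cons, sigma_of_right huv, mul_assoc]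

lemma sigma_mk_of_ne {x : α × Bool} (hu : x.1 ≠ u) (hv : x.1 ≠ v) :
    sigma u v (mk [x]) = mk [x] := by
  rcases x with ⟨j, _ | _⟩ <;> simp_all [mk_cons, sigma_of_of_ne]

lemma toWord_sigma_mk_cons (x : α × Bool) (L : List (α × Bool)) :
    (sigma u v (mk (x :: L))).toWord =
      (sigma u v (mk [x]) * mk (sigma u v (mk L)).toWord).toWord := by
  rw [mk_toWord, ← _root_.map_mul, mul_mk, List.singleton_append]

def leadLetters (u v : α) : Set (α × Bool) := {(u, true), (u, false), (v, true)}

/-- For a reduced word `L`, the reduced word `M` of `sigma u v (mk L)` satisfies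
`ImageShape u v L.head? M` (`imageShape_toWord_sigma`): the first letter of `L` prescribes how `M`
begins. `leadLetters u v` are the possible first letters when `L` begins with `u`. The conditions on
the letters after the prescribed prefixes are what keeps the description stable under prepending a
letter to `L`. -/
def ImageShape (u v : α) : Option (α × Bool) → List (α × Bool) → Prop
  | none, M => M = []
  | some x, M =>
    if x.1 = u then
      if x.2 then ∀ z ∈ M.head?, z ∈ leadLetters u v
      else
        ∃ R, M = (v, false) :: (u, false) :: (u, false) :: R ∧
          ∀ z ∈ R.head?, z ∉ leadLetters u v
    else if x.1 = v then
      if x.2 then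
        ∃ R, M = (v, false) :: (u, false) :: R ∧ (∀ z ∈ R.head?, z ∈ leadLetters u v) ∧
          ∀ R', R = (u, false) :: R' → ∀ z ∈ R'.head?, z ∈ leadLetters u v
      else
        ∃ R, M = (v, false) :: R ∧
          ∀ R', R = (u, false) :: R' → ∀ z ∈ R'.head?, z ∉ leadLetters u v
    else M.head? = some x

section ImageShape

variable {y : Option (α × Bool)} {M : List (α × Bool)}

@[simp] lemma imageShape_none : ImageShape u v none M ↔ M = [] := Iff.rfl

lemma imageShape_left : ImageShape u v (some (u, true)) M ↔
    ∀ z ∈ M.head?, z ∈ leadLetters u v := by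
  simp [ImageShape]

lemma imageShape_left_inv : ImageShape u v (some (u, false)) M ↔
    ∃ R, M = (v, false) :: (u, false) :: (u, false) :: R ∧
      ∀ z ∈ R.head?, z ∉ leadLetters u v := by
  simp [ImageShape]

lemma imageShape_right (huv : u ≠ v) : ImageShape u v (some (v, true)) M ↔
    ∃ R, M = (v, false) :: (u, false) :: R ∧ (∀ z ∈ R.head?, z ∈ leadLetters u v) ∧
      ∀ R', R = (u, false) :: R' → ∀ z ∈ R'.head?, z ∈ leadLetters u v := by
  simp [ImageShape, huv.symm]

lemma imageShape_right_inv (huv : u ≠ v) : ImageShape u v (some (v, false)) M ↔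
    ∃ R, M = (v, false) :: R ∧
      ∀ R', R = (u, false) :: R' → ∀ z ∈ R'.head?, z ∉ leadLetters u v := by
  simp [ImageShape, huv.symm]

lemma imageShape_other {x : α × Bool} (hu : x.1 ≠ u) (hv : x.1 ≠ v) :
    ImageShape u v (some x) M ↔ M.head? = some x := by
  simp [ImageShape, hu, hv]

lemma ImageShape.head_not_mem_leadLetters (huv : u ≠ v) (h : ImageShape u v y M)
    (hy : ∀ z ∈ y, z ≠ (u, true)) : ∀ z ∈ M.head?, z ∉ leadLetters u v := by
  rcases y with _ | y
  · simp_all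
  rcases letter_cases u v y with ⟨hyu, hyv⟩ | rfl | rfl | rfl | rfl
  · rw [imageShape_other hyu hyv] at h
    simp_all [leadLetters, Prod.ext_iff]
  · exact absurd rfl (hy _ rfl)
  · obtain ⟨R, rfl, -⟩ := imageShape_left_inv.1 h
    simp [leadLetters, huv.symm]
  · obtain ⟨R, rfl, -⟩ := (imageShape_right huv).1 h
    simp [leadLetters, huv.symm]
  · obtain ⟨R, rfl, -⟩ := (imageShape_right_inv huv).1 h
    simp [leadLetters, huv.symm]

lemma ImageShape.head_eq_or_mem (huv : u ≠ v) (h : ImageShape u v y M) :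
    ∀ z ∈ M.head?, z.1 = u ∨ z.1 = v ∨ y = some z := by
  rcases y with _ | y
  · simp_all
  rcases letter_cases u v y with ⟨hyu, hyv⟩ | rfl | rfl | rfl | rfl
  · rw [imageShape_other hyu hyv] at h
    simp_all
  · rw [imageShape_left] at h
    intro z hz
    rcases h z hz with rfl | rfl | rfl <;> simp
  · obtain ⟨R, rfl, -⟩ := imageShape_left_inv.1 h
    simp
  · obtain ⟨R, rfl, -⟩ := (imageShape_right huv).1 h
    simp
  · obtain ⟨R, rfl, -⟩ := (imageShape_right_inv huv).1 h
    simp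

lemma toWord_sigma_left_mul (hM : IsReduced M) (hV : ∀ z ∈ M.head?, z ≠ (v, false)) :
    (sigma u v (mk [(u, true)]) * mk M).toWord = (u, true) :: (u, true) :: (v, true) :: M := by
  rw [sigma_mk_left]
  exact toWord_eq_of_eq_mk (((hM.cons_of_head_ne (by simpa using hV)).cons_of_head_ne
    (by simp)).cons_of_head_ne (by simp)) (by simp [mk_cons, mul_assoc])

lemma toWord_sigma_mul_of_ne (huv : u ≠ v) (hM : IsReduced M) (h : ImageShape u v y M)
    {x : α × Bool} (hxu : x.1 ≠ u) (hxv : x.1 ≠ v) (hy : ∀ z ∈ y, z ≠ (x.1, !x.2)) :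
    (sigma u v (mk [x]) * mk M).toWord = x :: M := by
  refine toWord_eq_of_eq_mk (hM.cons_of_head_ne fun z hz hzx => ?_)
    (by rw [sigma_mk_of_ne hxu hxv, mul_mk]; rfl)
  rcases h.head_eq_or_mem huv z hz with hzu | hzv | rfl
  · simp [hzx, hxu] at hzu
  · simp [hzx, hxv] at hzv
  · exact hy z rfl hzx

lemma imageShape_cons_left (huv : u ≠ v) (hM : IsReduced M) (h : ImageShape u v y M)
    (hy : ∀ z ∈ y, z ≠ (u, false)) :
    ImageShape u v (some (u, true)) (sigma u v (mk [(u, true)]) * mk M).toWord := by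
  rw [imageShape_left]
  have noCancel : (∀ z ∈ M.head?, z ≠ (v, false)) →
      ∀ z ∈ (sigma u v (mk [(u, true)]) * mk M).toWord.head?, z ∈ leadLetters u v :=
    fun hV => by simp [toWord_sigma_left_mul hM hV, leadLetters]
  rcases y with _ | y
  · exact noCancel (by simp_all)
  rcases letter_cases u v y with ⟨hyu, hyv⟩ | rfl | rfl | rfl | rfl
  · rw [imageShape_other hyu hyv] at h
    exact noCancel (by rintro z hz rfl; simp_all)
  · rw [imageShape_left] at h
    exact noCancel fun z hz hzV => by simpa [hzV, leadLetters, huv.symm] using h z hz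
  · exact absurd rfl (hy _ rfl)
  · obtain ⟨R, rfl, hR, hR'⟩ := (imageShape_right huv).1 h
    rcases List.eq_cons_or_forall_head?_ne R (u, false) with ⟨R', rfl⟩ | hRu
    · rw [sigma_mk_left,
        toWord_eq_of_eq_mk hM.of_cons.of_cons.of_cons (by simp [mk_cons, mul_assoc])]
      exact hR' R' rfl
    · rw [sigma_mk_left, toWord_eq_of_eq_mk (L := (u, true) :: R)
        (hM.of_cons.of_cons.cons_of_head_ne hRu) (by simp [mk_cons, mul_assoc])]
      simp [leadLetters]
  · obtain ⟨R, rfl, hR⟩ := (imageShape_right_inv huv).1 h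
    rcases List.eq_cons_or_forall_head?_ne R (u, false) with ⟨R', rfl⟩ | hRu
    · rw [sigma_mk_left, toWord_eq_of_eq_mk (L := (u, true) :: R')
        (hM.of_cons.of_cons.cons_of_head_ne fun z hz hzu =>
          hR R' rfl z hz (by simp [hzu, leadLetters]))
        (by simp [mk_cons, mul_assoc])]
      simp [leadLetters]
    · rw [sigma_mk_left, toWord_eq_of_eq_mk (L := (u, true) :: (u, true) :: R)
        ((hM.of_cons.cons_of_head_ne hRu).cons_of_head_ne (by simp)) (by simp [mk_cons, mul_assoc])]
      simp [leadLetters]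

lemma imageShape_cons_left_inv (huv : u ≠ v) (hM : IsReduced M) (h : ImageShape u v y M)
    (hy : ∀ z ∈ y, z ≠ (u, true)) :
    ImageShape u v (some (u, false)) (sigma u v (mk [(u, false)]) * mk M).toWord := by
  rw [imageShape_left_inv, sigma_mk_left_inv]
  have hfar := h.head_not_mem_leadLetters huv hy
  refine ⟨M, toWord_eq_of_eq_mk (((hM.cons_of_head_ne fun z hz hzu => hfar z hz ?_)
    |>.cons_of_head_ne (by simp)).cons_of_head_ne (by simp)) (by simp [mk_cons, mul_assoc]), hfar⟩
  simp [hzu, leadLetters]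

lemma imageShape_cons_right (huv : u ≠ v) (hM : IsReduced M) (h : ImageShape u v y M)
    (hy : ∀ z ∈ y, z ≠ (v, false)) :
    ImageShape u v (some (v, true)) (sigma u v (mk [(v, true)]) * mk M).toWord := by
  rw [imageShape_right huv, sigma_mk_right huv]
  have noCancel : (∀ z ∈ M.head?, z ≠ (v, false)) → ∃ R,
      (mk [(v, false), (u, false), (v, true)] * mk M).toWord = (v, false) :: (u, false) :: R ∧
        (∀ z ∈ R.head?, z ∈ leadLetters u v) ∧
        ∀ R', R = (u, false) :: R' → ∀ z ∈ R'.head?, z ∈ leadLetters u v := fun hV =>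
    ⟨(v, true) :: M, toWord_eq_of_eq_mk (((hM.cons_of_head_ne (by simpa using hV))
      |>.cons_of_head_ne (by simp [huv.symm])).cons_of_head_ne (by simp))
      (by simp [mk_cons, mul_assoc]), by simp [leadLetters], by simp⟩
  rcases y with _ | y
  · exact noCancel (by simp_all)
  rcases letter_cases u v y with ⟨hyu, hyv⟩ | rfl | rfl | rfl | rfl
  · rw [imageShape_other hyu hyv] at h
    exact noCancel (by rintro z hz rfl; simp_all)
  · rw [imageShape_left] at h
    exact noCancel fun z hz hzV => by simpa [hzV, leadLetters, huv.symm] using h z hz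
  · obtain ⟨R, rfl, hR⟩ := imageShape_left_inv.1 h
    have hR' : IsReduced ((u, false) :: R) := hM.of_cons.of_cons.of_cons.cons_of_head_ne
      fun z hz hzu => hR z hz (by simp [hzu, leadLetters])
    refine ⟨(u, false) :: (u, false) :: R, toWord_eq_of_eq_mk (((hR'.cons_of_head_ne (by simp))
      |>.cons_of_head_ne (by simp)).cons_of_head_ne (by simp [huv])) (by simp [mk_cons, mul_assoc]),
      ?_, ?_⟩ <;> simp [leadLetters]
  · obtain ⟨R, rfl, hR, -⟩ := (imageShape_right huv).1 h
    refine ⟨(u, false) :: R, toWord_eq_of_eq_mk ((hM.of_cons.cons_of_head_ne (by simp))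
      |>.cons_of_head_ne (by simp [huv])) (by simp [mk_cons, mul_assoc]),
      by simp [leadLetters], ?_⟩
    rintro R' ⟨⟩
    exact hR
  · exact absurd rfl (hy _ rfl)

lemma imageShape_cons_right_inv (huv : u ≠ v) (hM : IsReduced M) (h : ImageShape u v y M)
    (hy : ∀ z ∈ y, z ≠ (v, true)) :
    ImageShape u v (some (v, false)) (sigma u v (mk [(v, false)]) * mk M).toWord := by
  rw [imageShape_right_inv huv, sigma_mk_right_inv huv]
  have noCancel : (∀ z ∈ M.head?, z ≠ (v, false)) → ∃ R,
      (mk [(v, false), (u, true), (v, true)] * mk M).toWord = (v, false) :: R ∧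
        ∀ R', R = (u, false) :: R' → ∀ z ∈ R'.head?, z ∉ leadLetters u v := fun hV =>
    ⟨(u, true) :: (v, true) :: M, toWord_eq_of_eq_mk (((hM.cons_of_head_ne (by simpa using hV))
      |>.cons_of_head_ne (by simp)).cons_of_head_ne (by simp [huv])) (by simp [mk_cons, mul_assoc]),
      by simp⟩
  rcases y with _ | y
  · exact noCancel (by simp_all)
  rcases letter_cases u v y with ⟨hyu, hyv⟩ | rfl | rfl | rfl | rfl
  · rw [imageShape_other hyu hyv] at h
    exact noCancel (by rintro z hz rfl; simp_all)
  · rw [imageShape_left] at h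
    exact noCancel fun z hz hzV => by simpa [hzV, leadLetters, huv.symm] using h z hz
  · obtain ⟨R, rfl, hR⟩ := imageShape_left_inv.1 h
    refine ⟨(u, false) :: R, toWord_eq_of_eq_mk ((hM.of_cons.of_cons.of_cons.cons_of_head_ne
      fun z hz hzu => hR z hz (by simp [hzu, leadLetters])).cons_of_head_ne (by simp))
      (by simp [mk_cons, mul_assoc]), ?_⟩
    rintro R' ⟨⟩
    exact hR
  · exact absurd rfl (hy _ rfl)
  · obtain ⟨R, rfl, hR⟩ := (imageShape_right_inv huv).1 h
    rcases List.eq_cons_or_forall_head?_ne R (u, false) with ⟨R', rfl⟩ | hRu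
    · have hfar := hR R' rfl
      refine ⟨R', toWord_eq_of_eq_mk (hM.of_cons.of_cons.cons_of_head_ne fun z hz hzv =>
        hfar z hz (by simp [hzv, leadLetters])) (by simp [mk_cons, mul_assoc]), ?_⟩
      rintro R'' rfl
      simp [leadLetters] at hfar
    · refine ⟨(u, true) :: R, toWord_eq_of_eq_mk ((hM.of_cons.cons_of_head_ne hRu)
        |>.cons_of_head_ne (by simp [huv])) (by simp [mk_cons, mul_assoc]), by simp⟩

end ImageShape

theorem imageShape_toWord_sigma (huv : u ≠ v) :
    ∀ {L : List (α × Bool)}, IsReduced L → ImageShape u v L.head? (sigma u v (mk L)).toWord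
  | [], _ => by simp
  | x :: t, hL => by
    have ih := imageShape_toWord_sigma huv hL.of_cons
    have hxt := hL.head_ne
    rw [List.head?_cons, toWord_sigma_mk_cons]
    rcases letter_cases u v x with ⟨hxu, hxv⟩ | rfl | rfl | rfl | rfl
    · rw [imageShape_other hxu hxv, toWord_sigma_mul_of_ne huv isReduced_toWord ih hxu hxv hxt]
      rfl
    · exact imageShape_cons_left huv isReduced_toWord ih hxt
    · exact imageShape_cons_left_inv huv isReduced_toWord ih hxt
    · exact imageShape_cons_right huv isReduced_toWord ih hxt
    · exact imageShape_cons_right_inv huv isReduced_toWord ih hxt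

lemma toWord_sigma_mk_cons_of_ne (huv : u ≠ v) {x : α × Bool} {L : List (α × Bool)}
    (hxu : x.1 ≠ u) (hxv : x.1 ≠ v) (hL : IsReduced (x :: L)) :
    (sigma u v (mk (x :: L))).toWord = x :: (sigma u v (mk L)).toWord := by
  rw [toWord_sigma_mk_cons, toWord_sigma_mul_of_ne huv isReduced_toWord
    (imageShape_toWord_sigma huv hL.of_cons) hxu hxv hL.head_ne]

lemma head_toWord_sigma (huv : u ≠ v) {L : List (α × Bool)} (hL : IsReduced L) {z : α × Bool}
    (hz : z ∈ (sigma u v (mk L)).toWord.head?) (hzu : z.1 ≠ u) (hzv : z.1 ≠ v) :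
    L.head? = some z :=
  (((imageShape_toWord_sigma huv hL).head_eq_or_mem huv z hz).resolve_left hzu).resolve_left hzv

def HasSquarePrefix (a : α) (g : FreeGroup α) : Prop :=
  ∃ K, g.toWord = (a, true) :: (a, true) :: K

lemma hasSquarePrefix_sigma_left (huv : u ≠ v) {g : FreeGroup α}
    (hg : g = of u ∨ HasSquarePrefix u g) : HasSquarePrefix u (sigma u v g) := by
  obtain ⟨L, hL, hLu, rfl⟩ : ∃ L, IsReduced ((u, true) :: L) ∧
      (∀ z ∈ L.head?, z = (u, true)) ∧ g = mk ((u, true) :: L) := by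
    rcases hg with rfl | ⟨K, hK⟩
    · exact ⟨[], by simp, by simp, rfl⟩
    · exact ⟨(u, true) :: K, hK ▸ isReduced_toWord, by simp, by rw [← hK, mk_toWord]⟩
  have hshape := imageShape_toWord_sigma huv hL.of_cons
  rw [HasSquarePrefix, toWord_sigma_mk_cons, toWord_sigma_left_mul isReduced_toWord ?_]
  · exact ⟨_, rfl⟩
  rcases L with _ | ⟨x, L⟩
  · simp_all
  · obtain rfl : x = (u, true) := hLu x rfl
    intro z hz hzV
    simpa [hzV, leadLetters, huv.symm] using imageShape_left.1 hshape z hz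

lemma hasSquarePrefix_sigma_iff (huv : u ≠ v) {a : α} (hau : a ≠ u) (hav : a ≠ v)
    (g : FreeGroup α) : HasSquarePrefix a (sigma u v g) ↔ HasSquarePrefix a g := by
  obtain ⟨L, hL, rfl⟩ : ∃ L, IsReduced L ∧ g = mk L :=
    ⟨g.toWord, isReduced_toWord, mk_toWord.symm⟩
  simp only [HasSquarePrefix, toWord_mk, hL.reduce_eq]
  constructor
  · rintro ⟨K, hK⟩
    obtain ⟨t, rfl⟩ := List.head?_eq_some_iff.1 (head_toWord_sigma huv hL (z := (a, true))
      (by simp [hK]) hau hav)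
    rw [toWord_sigma_mk_cons_of_ne huv hau hav hL, List.cons.injEq] at hK
    obtain ⟨K', rfl⟩ := List.head?_eq_some_iff.1
      (head_toWord_sigma huv hL.of_cons (z := (a, true)) (by simp [hK.2]) hau hav)
    exact ⟨K', rfl⟩
  · rintro ⟨K, rfl⟩
    rw [toWord_sigma_mk_cons_of_ne huv hau hav hL,
      toWord_sigma_mk_cons_of_ne huv hau hav hL.of_cons]
    exact ⟨_, rfl⟩

lemma two_le_countP_of_hasSquarePrefix {a : α} {g : FreeGroup α} (h : HasSquarePrefix a g) :
    2 ≤ g.toWord.countP (fun p => decide (p.1 = a)) := by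
  obtain ⟨K, hK⟩ := h
  simp [hK]

def squareSet (a : α) : Set (FreeGroup α) := {g | g = of a ∨ HasSquarePrefix a g}

lemma mapsTo_squareSet (huv : u ≠ v) {e : MulAut (FreeGroup α)} (he : ∀ g, e g = sigma u v g) :
    Set.MapsTo e (squareSet u) (squareSet u) :=
  fun g hg => Or.inr (he g ▸ hasSquarePrefix_sigma_left huv hg)

lemma mapsTo_squareSet_of_ne (huv : u ≠ v) {a : α} (hau : a ≠ u) (hav : a ≠ v)
    {e : MulAut (FreeGroup α)} (he : ∀ g, e g = sigma u v g) (b : Bool) :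
    Set.MapsTo ⇑(if b then e else e⁻¹) (squareSet a) (squareSet a) := by
  have hea : e (of a) = of a := by rw [he, sigma_of_of_ne hau hav]
  have hmem : ∀ g, e g ∈ squareSet a ↔ g ∈ squareSet a := fun g => by
    refine Iff.or ?_ ?_
    · conv_lhs => rw [← hea]
      exact e.apply_eq_iff_eq
    · rw [he]
      exact hasSquarePrefix_sigma_iff huv hau hav g
  cases b
  · exact fun g hg => (hmem _).1 (by rwa [if_neg Bool.false_ne_true, MulAut.apply_inv_self])
  · exact fun g hg => (hmem g).2 hg

end WadaType3

lemma xL_injective (n : ℕ) : Function.Injective (xL n) :=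
  fun i j h => Fin.ext (by simpa [xL] using congrArg Fin.val h)

lemma xL_ne_xR {n : ℕ} {i j : Fin (n - 1)} (h : (i : ℕ) ≤ j) : xL n i ≠ xR n j :=
  fun hij => by
    have := congrArg Fin.val hij
    simp only [xL, xR] at this
    omega

open WadaType3

/-- If `w` is a braid word beginning with `σ_1` and containing no occurrence of
`σ_1⁻¹`, and `σ̂` is the image of the braid represented by `w` under Wada's
representation of type (3)
(`σ_i ↦ (x_i ↦ x_i^2 x_{i+1}, x_{i+1} ↦ x_{i+1}⁻¹ x_i⁻¹ x_{i+1})`), then the reduced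
word of `σ̂(x_1)` contains at least 2 occurrences of letters `x_1^{±1}`. -/
theorem wada_type3_sigma1_positive_two_occurrences (n : ℕ) (hn : 2 ≤ n)
    (ψ : PresentedGroup (braidRels (n - 1)) →* MulAut (FreeGroup (Fin n)))
    (hψ : ∀ i : Fin (n - 1),
      (ψ (PresentedGroup.of i)) (FreeGroup.of (xL n i)) =
          FreeGroup.of (xL n i) ^ 2 * FreeGroup.of (xR n i) ∧
      (ψ (PresentedGroup.of i)) (FreeGroup.of (xR n i)) =
          (FreeGroup.of (xR n i))⁻¹ * (FreeGroup.of (xL n i))⁻¹ * FreeGroup.of (xR n i) ∧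
      ∀ j : Fin n, j ≠ xL n i → j ≠ xR n i →
        (ψ (PresentedGroup.of i)) (FreeGroup.of j) = FreeGroup.of j)
    (w : List (Fin (n - 1) × Bool))
    (hhead : w.head? = some ((⟨0, by omega⟩ : Fin (n - 1)), true))
    (hnonneg : ∀ p ∈ w, p ≠ ((⟨0, by omega⟩ : Fin (n - 1)), false)) :
    2 ≤ ((ψ (PresentedGroup.mk (braidRels (n - 1)) (FreeGroup.mk w)))
          (FreeGroup.of (⟨0, by omega⟩ : Fin n))).toWord.countP
            (fun p => decide (p.1 = (⟨0, by omega⟩ : Fin n))) := by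
  set i₀ : Fin (n - 1) := ⟨0, by omega⟩
  have hσ : ∀ i g, ψ (PresentedGroup.of i) g = sigma (xL n i) (xR n i) g := fun i =>
    DFunLike.congr_fun (eq_sigma (xL_ne_xR le_rfl) (ψ (PresentedGroup.of i)).toMonoidHom
      (hψ i).1 (hψ i).2.1 (hψ i).2.2)
  have hmaps : ∀ p ∈ w.tail, Set.MapsTo ⇑(if p.2 then ψ (PresentedGroup.of p.1)
      else (ψ (PresentedGroup.of p.1))⁻¹) (squareSet (xL n i₀)) (squareSet (xL n i₀)) := by
    rintro ⟨i, b⟩ hp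
    rcases eq_or_ne i i₀ with rfl | hi
    · obtain rfl : b = true := by simpa using hnonneg _ (List.mem_of_mem_tail hp)
      exact mapsTo_squareSet (xL_ne_xR le_rfl) (hσ _)
    · exact mapsTo_squareSet_of_ne (xL_ne_xR le_rfl) ((xL_injective n).ne hi.symm)
        (xL_ne_xR (Nat.zero_le _)) (hσ i) b
  obtain ⟨l, rfl⟩ := List.head?_eq_some_iff.1 hhead
  have hw : PresentedGroup.mk _ (FreeGroup.mk ((i₀, true) :: l)) =
      PresentedGroup.of i₀ * PresentedGroup.mk (braidRels (n - 1)) (FreeGroup.mk l) := by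
    rw [← List.singleton_append, ← FreeGroup.mul_mk, map_mul]
    rfl
  rw [hw, map_mul, MulAut.mul_apply, hσ]
  exact two_le_countP_of_hasSquarePrefix (hasSquarePrefix_sigma_left (xL_ne_xR le_rfl)
    (Set.MapsTo.mulAut_mk (ψ.comp (PresentedGroup.mk _)) hmaps (Or.inl rfl)))
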